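/- Chain rule for trade-off functions (finite support): let X, X' be discrete random variables with finite support, and let Y (resp. Y') be jointly distributed with X (resp. X'). Suppose supp(X) = supp(X'). Then T((X,Y),(X',Y'))(α) = inf over families (α_x)_{x} with α_x ∈ [0,1] and E_{x∼X}[α_x] ≤ α of E_{x∼X'}[f_x(α_x)], where f_x = T(Y|_{X=x}, Y'|_{X'=x}). -/

import Mathlib

/-!
A test `φ` on pairs `(x, y)` is the same as a family of tests `φ_x` on `y`. Its type I error
is `E_{x∼X}[α_x]`, where `α_x` is the type I error of `φ_x`, and its type II error is
`E_{x∼X'}[1 - E[φ_x(Y'|_{X'=x})]] ≥ E_{x∼X'}[f_x(α_x)]`. Conversely, for a given family `(α_x)`,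
gluing tests that are `ε`-optimal for each `f_x(α_x)` gives a joint test whose type II error is
within `ε` of `E_{x∼X'}[f_x(α_x)]`.
-/

open Finset

def IsPMF {Ω : Type*} [Fintype Ω] (p : Ω → ℝ) : Prop :=
  (∀ x, 0 ≤ p x) ∧ ∑ x, p x = 1

noncomputable def tradeoff {Ω : Type*} [Fintype Ω] (p q : Ω → ℝ) (α : ℝ) : ℝ :=
  sInf { β | ∃ φ : Ω → ℝ, (∀ x, φ x ∈ Set.Icc (0:ℝ) 1) ∧
    (∑ x, p x * φ x) ≤ α ∧ β = 1 - ∑ x, q x * φ x }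

section Tradeoff

variable {Ω : Type*} [Fintype Ω] {p q φ : Ω → ℝ} {α : ℝ}

lemma sum_mul_le_sum_of_le_one (hq : ∀ x, 0 ≤ q x) (hφ : ∀ x, φ x ≤ 1) :
    ∑ x, q x * φ x ≤ ∑ x, q x :=
  sum_le_sum fun x _ => mul_le_of_le_one_right (hq x) (hφ x)

lemma IsPMF.sum_mul_mem_Icc (hq : IsPMF q) (hφ : ∀ x, φ x ∈ Set.Icc (0:ℝ) 1) :
    ∑ x, q x * φ x ∈ Set.Icc (0:ℝ) 1 :=
  ⟨sum_nonneg fun x _ => mul_nonneg (hq.1 x) (hφ x).1,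
    hq.2 ▸ sum_mul_le_sum_of_le_one hq.1 fun x => (hφ x).2⟩

lemma tradeoff_le (hq : ∀ x, 0 ≤ q x) (hφ : ∀ x, φ x ∈ Set.Icc (0:ℝ) 1)
    (hpφ : ∑ x, p x * φ x ≤ α) : tradeoff p q α ≤ 1 - ∑ x, q x * φ x := by
  refine csInf_le ⟨1 - ∑ x, q x, ?_⟩ ⟨φ, hφ, hpφ, rfl⟩
  rintro β ⟨ψ, hψ, -, rfl⟩
  linarith [sum_mul_le_sum_of_le_one hq fun x => (hψ x).2]

lemma tradeoff_nonneg (hq : IsPMF q) : 0 ≤ tradeoff p q α :=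
  Real.sInf_nonneg <| by
    rintro β ⟨ψ, hψ, -, rfl⟩
    linarith [(hq.sum_mul_mem_Icc hψ).2]

lemma le_tradeoff {b : ℝ} (hα : 0 ≤ α)
    (h : ∀ φ : Ω → ℝ, (∀ x, φ x ∈ Set.Icc (0:ℝ) 1) → ∑ x, p x * φ x ≤ α →
      b ≤ 1 - ∑ x, q x * φ x) :
    b ≤ tradeoff p q α :=
  le_csInf ⟨1, fun _ => 0, fun _ => ⟨le_rfl, zero_le_one⟩, by simpa using hα, by simp⟩
    fun _ ⟨φ, hφ, hpφ, hβ⟩ => hβ ▸ h φ hφ hpφ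

lemma exists_lt_tradeoff_add (hα : 0 ≤ α) {ε : ℝ} (hε : 0 < ε) :
    ∃ φ : Ω → ℝ, (∀ x, φ x ∈ Set.Icc (0:ℝ) 1) ∧ ∑ x, p x * φ x ≤ α ∧
      1 - ∑ x, q x * φ x < tradeoff p q α + ε := by
  by_contra! h
  linarith [le_tradeoff hα h]

end Tradeoff

section ChainRule

variable {𝒳 𝒴 : Type*} [Fintype 𝒳] [Fintype 𝒴]

lemma sum_prod_kernel_mul (pX : 𝒳 → ℝ) (kY : 𝒳 → 𝒴 → ℝ) (Φ : 𝒳 × 𝒴 → ℝ) :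
    ∑ z : 𝒳 × 𝒴, pX z.1 * kY z.1 z.2 * Φ z = ∑ x, pX x * ∑ y, kY x y * Φ (x, y) := by
  simp only [Fintype.sum_prod_type, mul_assoc, mul_sum]

variable {pX pX' : 𝒳 → ℝ} {kY kY' : 𝒳 → 𝒴 → ℝ}

lemma one_sub_sum_prod_kernel_mul (hX' : ∑ x, pX' x = 1) (Φ : 𝒳 × 𝒴 → ℝ) :
    1 - ∑ z : 𝒳 × 𝒴, pX' z.1 * kY' z.1 z.2 * Φ z =
      ∑ x, pX' x * (1 - ∑ y, kY' x y * Φ (x, y)) := by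
  simp only [sum_prod_kernel_mul, mul_sub, mul_one, sum_sub_distrib, hX']

lemma tradeoff_prod_le_sum_tradeoff (hX : ∀ x, 0 ≤ pX x) (hX' : IsPMF pX')
    (hkY' : ∀ x y, 0 ≤ kY' x y) {α : ℝ} {a : 𝒳 → ℝ} (ha : ∀ x, a x ∈ Set.Icc (0:ℝ) 1)
    (hsum : ∑ x, pX x * a x ≤ α) :
    tradeoff (fun z : 𝒳 × 𝒴 => pX z.1 * kY z.1 z.2) (fun z => pX' z.1 * kY' z.1 z.2) α ≤
      ∑ x, pX' x * tradeoff (kY x) (kY' x) (a x) := by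
  refine le_of_forall_pos_le_add fun ε hε => ?_
  choose φ hφ hkφ hφ_lt using fun x => exists_lt_tradeoff_add (p := kY x) (q := kY' x) (ha x).1 hε
  have hfeas : ∑ z : 𝒳 × 𝒴, pX z.1 * kY z.1 z.2 * φ z.1 z.2 ≤ α := by
    rw [sum_prod_kernel_mul pX kY fun z => φ z.1 z.2]
    exact (sum_le_sum fun x _ => mul_le_mul_of_nonneg_left (hkφ x) (hX x)).trans hsum
  calc _ ≤ 1 - ∑ z : 𝒳 × 𝒴, pX' z.1 * kY' z.1 z.2 * φ z.1 z.2 :=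
        tradeoff_le (fun z => mul_nonneg (hX'.1 z.1) (hkY' z.1 z.2)) (fun z => hφ z.1 z.2) hfeas
    _ = ∑ x, pX' x * (1 - ∑ y, kY' x y * φ x y) := one_sub_sum_prod_kernel_mul hX'.2 _
    _ ≤ ∑ x, pX' x * (tradeoff (kY x) (kY' x) (a x) + ε) :=
        sum_le_sum fun x _ => mul_le_mul_of_nonneg_left (hφ_lt x).le (hX'.1 x)
    _ = ∑ x, pX' x * tradeoff (kY x) (kY' x) (a x) + ε := by
        simp only [mul_add, sum_add_distrib, ← sum_mul, hX'.2, one_mul]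

lemma sum_tradeoff_le_one_sub_sum_prod (hX' : IsPMF pX') (hkY' : ∀ x y, 0 ≤ kY' x y)
    {Φ : 𝒳 × 𝒴 → ℝ} (hΦ : ∀ z, Φ z ∈ Set.Icc (0:ℝ) 1) :
    ∑ x, pX' x * tradeoff (kY x) (kY' x) (∑ y, kY x y * Φ (x, y)) ≤
      1 - ∑ z : 𝒳 × 𝒴, pX' z.1 * kY' z.1 z.2 * Φ z := by
  rw [one_sub_sum_prod_kernel_mul hX'.2]
  exact sum_le_sum fun x _ => mul_le_mul_of_nonneg_left
    (tradeoff_le (hkY' x) (fun y => hΦ (x, y)) le_rfl) (hX'.1 x)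

end ChainRule

theorem tradeoff_chain_rule_general {𝒳 𝒴 : Type*} [Fintype 𝒳] [Fintype 𝒴]
    (pX pX' : 𝒳 → ℝ) (hX : IsPMF pX) (hX' : IsPMF pX')
    (kY kY' : 𝒳 → 𝒴 → ℝ) (hkY : ∀ x, IsPMF (kY x)) (hkY' : ∀ x, IsPMF (kY' x))
    (α : ℝ) (hα : α ∈ Set.Icc (0:ℝ) 1) :
    tradeoff (fun p : 𝒳 × 𝒴 => pX p.1 * kY p.1 p.2)
             (fun p : 𝒳 × 𝒴 => pX' p.1 * kY' p.1 p.2) α =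
      sInf { v | ∃ a : 𝒳 → ℝ, (∀ x, a x ∈ Set.Icc (0:ℝ) 1) ∧
        (∑ x, pX x * a x) ≤ α ∧
        v = ∑ x, pX' x * tradeoff (kY x) (kY' x) (a x) } := by
  have hkY'_nonneg : ∀ x y, 0 ≤ kY' x y := fun x => (hkY' x).1
  have hbdd : BddBelow { v | ∃ a : 𝒳 → ℝ, (∀ x, a x ∈ Set.Icc (0:ℝ) 1) ∧
      (∑ x, pX x * a x) ≤ α ∧ v = ∑ x, pX' x * tradeoff (kY x) (kY' x) (a x) } := by
    refine ⟨0, ?_⟩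
    rintro _ ⟨a, -, -, rfl⟩
    exact sum_nonneg fun x _ => mul_nonneg (hX'.1 x) (tradeoff_nonneg (hkY' x))
  apply le_antisymm
  · refine le_csInf ⟨_, fun _ => 0, fun _ => ⟨le_rfl, zero_le_one⟩, by simpa using hα.1, rfl⟩ ?_
    rintro _ ⟨a, ha, hsum, rfl⟩
    exact tradeoff_prod_le_sum_tradeoff hX.1 hX' hkY'_nonneg ha hsum
  · refine le_tradeoff hα.1 fun Φ hΦ hfeas => (csInf_le hbdd ⟨_, ?_, ?_, rfl⟩).trans
      (sum_tradeoff_le_one_sub_sum_prod hX' hkY'_nonneg hΦ)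
    · exact fun x => (hkY x).sum_mul_mem_Icc fun y => hΦ (x, y)
    · rwa [← sum_prod_kernel_mul]

/-- Chain rule for trade-off functions (finite support): for joint distributions
given by marginals `pX, pX'` (with equal support) and conditional kernels `kY, kY'`,
`T((X,Y),(X',Y'))(α) = inf { E_{x∼X'}[f_x(α_x)] : α_x ∈ [0,1], E_{x∼X}[α_x] ≤ α }`,
where `f_x = T(Y|_{X=x}, Y'|_{X'=x})`. -/
theorem tradeoff_chain_rule {𝒳 𝒴 : Type*} [Fintype 𝒳] [Fintype 𝒴]
    (pX pX' : 𝒳 → ℝ) (hX : IsPMF pX) (hX' : IsPMF pX')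
    (hsupp : ∀ x, pX x ≠ 0 ↔ pX' x ≠ 0)
    (kY kY' : 𝒳 → 𝒴 → ℝ) (hkY : ∀ x, IsPMF (kY x)) (hkY' : ∀ x, IsPMF (kY' x))
    (α : ℝ) (hα : α ∈ Set.Icc (0:ℝ) 1) :
    tradeoff (fun p : 𝒳 × 𝒴 => pX p.1 * kY p.1 p.2)
             (fun p : 𝒳 × 𝒴 => pX' p.1 * kY' p.1 p.2) α =
      sInf { v | ∃ a : 𝒳 → ℝ, (∀ x, a x ∈ Set.Icc (0:ℝ) 1) ∧
        (∑ x, pX x * a x) ≤ α ∧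
        v = ∑ x, pX' x * tradeoff (kY x) (kY' x) (a x) } :=
  tradeoff_chain_rule_general pX pX' hX hX' kY kY' hkY hkY' α hα
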